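/- Let D = {S(a,a), R(a,a)} and let O_loop be the uGC₂⁻(1,=) ontology containing ∀x(S(x,x) → (R(x,x) → (∃y(R(x,y) ∧ x≠y) ∨ ∃y(S(x,y) ∧ x≠y)))) and ∀x(∃y(W(y,x) ∧ x≠y) → ∃y W'(x,y)) for (W,W') ∈ {(R,R'),(S,S')}. Then O_loop, D ⊨ (∃xy R'(x,y)) ∨ (∃xy S'(x,y)) but O_loop, D ⊭ ∃xy R'(x,y) and O_loop, D ⊭ ∃xy S'(x,y); hence O_loop is not materializable although every bouquet has a 1-materialization with respect to O_loop. -/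

import Mathlib

/-- A relational signature. -/
structure Sig where
  Rel : Type
  ar : Rel → ℕ

/-- A relational atom (fact) over the signature `σ` with arguments in `V`. -/
abbrev Atm (σ : Sig) (V : Type) : Type := (R : σ.Rel) × (Fin (σ.ar R) → V)

/-- An interpretation (or instance): a set of facts. -/
abbrev Interp (σ : Sig) (V : Type) : Type := Set (Atm σ V)

/-- The domain of an interpretation: the elements occurring in some fact. -/
def Interp.dom {σ : Sig} {V : Type} (A : Interp σ V) : Set V :=
  { v | ∃ f ∈ A, ∃ i, f.2 i = v }

/-- `h` is a homomorphism from `A` to `B`. -/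
def IsHom {σ : Sig} {V W : Type} (A : Interp σ V) (B : Interp σ W) (h : V → W) : Prop :=
  ∀ f ∈ A, (⟨f.1, h ∘ f.2⟩ : Atm σ W) ∈ B

/-- An ontology, given semantically as the class of its models. -/
def Ont (σ : Sig) : Type 1 := ∀ W : Type, Interp σ W → Prop

/-- `(W, ι, B)` is a model of the ontology `O` and the instance `D` (with standard names:
`ι` injective, and every fact of `D` holds in `B`). -/
def IsMod {σ : Sig} (O : Ont σ) {V W : Type} (D : Interp σ V) (ι : V → W)
    (B : Interp σ W) : Prop :=
  Function.Injective ι ∧ IsHom D B ι ∧ O W B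

/-- A conjunctive query of arity `k`, given by its finite canonical database together with
the tuple of answer variables. -/
structure CQ (σ : Sig) (k : ℕ) where
  V : Type
  finV : Finite V
  facts : Interp σ V
  finFacts : facts.Finite
  ans : Fin k → V

/-- `t` is an answer to the CQ `q` in `B`. -/
def CQAns {σ : Sig} {k : ℕ} {W : Type} (B : Interp σ W) (q : CQ σ k)
    (t : Fin k → W) : Prop :=
  ∃ h : q.V → W, IsHom q.facts B h ∧ h ∘ q.ans = t

/-- A union of conjunctive queries. -/
abbrev UCQ (σ : Sig) (k : ℕ) := List (CQ σ k)

/-- `t` is an answer to the UCQ `qs` in `B`. -/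
def UCQAns {σ : Sig} {k : ℕ} {W : Type} (B : Interp σ W) (qs : UCQ σ k)
    (t : Fin k → W) : Prop :=
  ∃ q ∈ qs, CQAns B q t

/-- `a` is a certain answer to the CQ `q` on `D` given `O`. -/
def CertainCQ {σ : Sig} (O : Ont σ) {V : Type} {k : ℕ} (D : Interp σ V) (q : CQ σ k)
    (a : Fin k → V) : Prop :=
  ∀ (W : Type) (ι : V → W) (B : Interp σ W), IsMod O D ι B → CQAns B q (ι ∘ a)

/-- `a` is a certain answer to the UCQ `qs` on `D` given `O`. -/
def CertainUCQ {σ : Sig} (O : Ont σ) {V : Type} {k : ℕ} (D : Interp σ V) (qs : UCQ σ k)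
    (a : Fin k → V) : Prop :=
  ∀ (W : Type) (ι : V → W) (B : Interp σ W), IsMod O D ι B → UCQAns B qs (ι ∘ a)

/-- `D` is consistent w.r.t. `O`. -/
def Consistent {σ : Sig} (O : Ont σ) {V : Type} (D : Interp σ V) : Prop :=
  ∃ (W : Type) (ι : V → W) (B : Interp σ W), IsMod O D ι B

/-- `(W, ι, B)` is a materialization of `O` and `D`: a model in which, for every union of
conjunctive queries and every tuple over the domain of `D`, the answers are exactly the
certain answers. -/
def IsMat {σ : Sig} (O : Ont σ) {V W : Type} (D : Interp σ V) (ι : V → W)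
    (B : Interp σ W) : Prop :=
  IsMod O D ι B ∧ ∀ (k : ℕ) (qs : UCQ σ k) (a : Fin k → V), (∀ i, a i ∈ D.dom) →
    (UCQAns B qs (ι ∘ a) ↔ CertainUCQ O D qs a)

/-- The binary relation symbols `R, S, R', S'`. -/
inductive Rel15 : Type
  | R
  | S
  | R'
  | S'

/-- The signature consisting of the binary relations `R, S, R', S'`. -/
def σ15 : Sig := ⟨Rel15, fun _ => 2⟩

/-- The uGC₂⁻(1,=) ontology `O_loop`, given semantically; it consists of the sentences
`∀x (S(x,x) → (R(x,x) → (∃y(R(x,y) ∧ x≠y) ∨ ∃y(S(x,y) ∧ x≠y))))` and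
`∀x (∃y(W(y,x) ∧ x≠y) → ∃y W'(x,y))` for `(W,W') ∈ {(R,R'), (S,S')}`. -/
def OLoop : Ont σ15 := fun W B =>
  (∀ x ∈ B.dom, (⟨Rel15.S, ![x, x]⟩ : Atm σ15 W) ∈ B →
    ((⟨Rel15.R, ![x, x]⟩ : Atm σ15 W) ∈ B →
      (∃ y, y ≠ x ∧ (⟨Rel15.R, ![x, y]⟩ : Atm σ15 W) ∈ B) ∨
      (∃ y, y ≠ x ∧ (⟨Rel15.S, ![x, y]⟩ : Atm σ15 W) ∈ B))) ∧
  (∀ x ∈ B.dom, (∃ y, y ≠ x ∧ (⟨Rel15.R, ![y, x]⟩ : Atm σ15 W) ∈ B) →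
    ∃ y, (⟨Rel15.R', ![x, y]⟩ : Atm σ15 W) ∈ B) ∧
  (∀ x ∈ B.dom, (∃ y, y ≠ x ∧ (⟨Rel15.S, ![y, x]⟩ : Atm σ15 W) ∈ B) →
    ∃ y, (⟨Rel15.S', ![x, y]⟩ : Atm σ15 W) ∈ B)

/-- The instance `D = {S(a,a), R(a,a)}`. -/
def DLoop : Interp σ15 Unit :=
  {⟨Rel15.S, ![(), ()]⟩, ⟨Rel15.R, ![(), ()]⟩}

/-- The Boolean conjunctive query `q ← R'(x,y)`. -/
def qR15 : CQ σ15 0 where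
  V := Fin 2
  finV := inferInstance
  facts := {⟨Rel15.R', ![0, 1]⟩}
  finFacts := Set.finite_singleton _
  ans := Fin.elim0

/-- The Boolean conjunctive query `q ← S'(x,y)`. -/
def qS15 : CQ σ15 0 where
  V := Fin 2
  finV := inferInstance
  facts := {⟨Rel15.S', ![0, 1]⟩}
  finFacts := Set.finite_singleton _
  ans := Fin.elim0

/-- The neighbours of `a` in `D`. -/
def Nb15 {V : Type} (D : Interp σ15 V) (a : V) : Set V :=
  {v | v ≠ a ∧ ∃ r : Rel15,
    (⟨r, ![a, v]⟩ : Atm σ15 V) ∈ D ∨ (⟨r, ![v, a]⟩ : Atm σ15 V) ∈ D}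

/-- `D` is a bouquet with root `a`: it equals the 1-neighbourhood of `a`. -/
def IsBouquet15 {V : Type} (D : Interp σ15 V) (a : V) : Prop :=
  a ∈ D.dom ∧ ∀ v ∈ D.dom, v = a ∨ v ∈ Nb15 D a

/-- The 1-neighbourhood of `w` in the interpretation `B`. -/
def Nbhd15 {W : Type} (B : Interp σ15 W) (w : W) : Set W :=
  {x | x = w ∨ ∃ r : Rel15,
    (⟨r, ![w, x]⟩ : Atm σ15 W) ∈ B ∨ (⟨r, ![x, w]⟩ : Atm σ15 W) ∈ B}

/-- There is a 1-materialization of `O_loop` and the bouquet `D` with root `a`: a model of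
`O_loop` and `D` whose 1-neighbourhood of the root admits, into every model of `O_loop`
and `D`, a homomorphism preserving the domain of `D`. -/
def OneMat15 {V : Type} (D : Interp σ15 V) (a : V) : Prop :=
  ∃ (W : Type) (ι : V → W) (B : Interp σ15 W), IsMod OLoop D ι B ∧
    ∀ (W' : Type) (ι' : V → W') (B' : Interp σ15 W'), IsMod OLoop D ι' B' →
      ∃ g : W → W',
        (∀ f ∈ B, (∀ i, f.2 i ∈ Nbhd15 B (ι a)) →
          (⟨f.1, g ∘ f.2⟩ : Atm σ15 W') ∈ B') ∧
        (∀ d ∈ D.dom, g (ι d) = ι' d)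

/-- `O_loop` is materializable. -/
def Materializable15 : Prop :=
  ∀ (V : Type) (D : Interp σ15 V), Consistent OLoop D →
    ∃ (W : Type) (ι : V → W) (B : Interp σ15 W), IsMat OLoop D ι B

set_option maxHeartbeats 1000000

attribute [reducible] σ15

lemma atm_eq_iff {W : Type} {r r' : Rel15} {f f' : Fin 2 → W} :
    (⟨r, f⟩ : Atm σ15 W) = ⟨r', f'⟩ ↔ r = r' ∧ f 0 = f' 0 ∧ f 1 = f' 1 := by
  constructor
  · intro h
    injection h with h1 h2
    subst h1
    exact ⟨rfl, congrFun h2 0, congrFun h2 1⟩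
  · rintro ⟨rfl, h0, h1⟩
    have : f = f' := by funext i; fin_cases i <;> assumption
    exact congrArg (Sigma.mk r) this
lemma comp_vec2 {A B : Type} (g : A → B) (x y : A) : g ∘ ![x, y] = ![g x, g y] := by
  funext i; fin_cases i <;> rfl

lemma part1 : CertainUCQ OLoop DLoop [qR15, qS15] Fin.elim0 := by
  rintro W ι B ⟨hinj, hhom, hO⟩
  have hS : (⟨Rel15.S, ![ι (), ι ()]⟩ : Atm σ15 W) ∈ B := by
    have := hhom ⟨Rel15.S, ![(), ()]⟩ (by left; rfl)
    dsimp only at this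
    rwa [show ι ∘ ![(), ()] = ![ι (), ι ()] from comp_vec2 ι () ()] at this
  have hR : (⟨Rel15.R, ![ι (), ι ()]⟩ : Atm σ15 W) ∈ B := by
    have := hhom ⟨Rel15.R, ![(), ()]⟩ (by right; rfl)
    dsimp only at this
    rwa [show ι ∘ ![(), ()] = ![ι (), ι ()] from comp_vec2 ι () ()] at this
  have hdom : ι () ∈ B.dom := ⟨⟨Rel15.S, ![ι (), ι ()]⟩, hS, (0 : Fin 2), rfl⟩
  obtain (⟨y, hy, hRy⟩ | ⟨y, hy, hSy⟩) := hO.1 (ι ()) hdom hS hR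
  · have hydom : y ∈ B.dom := ⟨⟨Rel15.R, ![ι (), y]⟩, hRy, (1 : Fin 2), rfl⟩
    obtain ⟨z, hz⟩ := hO.2.1 y hydom ⟨ι (), Ne.symm hy, hRy⟩
    refine ⟨qR15, by simp, ![y, z], ?_, ?_⟩
    · rintro f hf
      have hf' : f = ⟨Rel15.R', ![(0 : Fin 2), (1 : Fin 2)]⟩ := hf
      subst hf'
      have : (![y,z] : Fin 2 → W) ∘ ![0, 1] = ![y, z] := by funext i; fin_cases i <;> rfl
      show (⟨Rel15.R', ![y,z] ∘ ![0,1]⟩ : Atm σ15 W) ∈ B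
      rwa [this]
    · funext i; exact i.elim0
  · have hydom : y ∈ B.dom := ⟨⟨Rel15.S, ![ι (), y]⟩, hSy, (1 : Fin 2), rfl⟩
    obtain ⟨z, hz⟩ := hO.2.2 y hydom ⟨ι (), Ne.symm hy, hSy⟩
    refine ⟨qS15, by simp, ![y, z], ?_, ?_⟩
    · rintro f hf
      have hf' : f = ⟨Rel15.S', ![(0 : Fin 2), (1 : Fin 2)]⟩ := hf
      subst hf'
      have : (![y,z] : Fin 2 → W) ∘ ![0, 1] = ![y, z] := by funext i; fin_cases i <;> rfl
      show (⟨Rel15.S', ![y,z] ∘ ![0,1]⟩ : Atm σ15 W) ∈ B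
      rwa [this]
    · funext i; exact i.elim0
def B2 : Interp σ15 Bool :=
  {⟨Rel15.S, ![false, false]⟩, ⟨Rel15.R, ![false, false]⟩,
   ⟨Rel15.S, ![false, true]⟩, ⟨Rel15.S', ![true, true]⟩}

def B3 : Interp σ15 Bool :=
  {⟨Rel15.S, ![false, false]⟩, ⟨Rel15.R, ![false, false]⟩,
   ⟨Rel15.R, ![false, true]⟩, ⟨Rel15.R', ![true, true]⟩}

lemma B2_mod : IsMod OLoop DLoop (fun _ => false) B2 := by
  refine ⟨fun a b _ => Subsingleton.elim a b, ?_, ?_, ?_, ?_⟩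
  · rintro f hf
    rcases hf with rfl | rfl
    · dsimp only
      rw [show (fun (_ : Unit) => false) ∘ ![(), ()] = ![false, false] from comp_vec2 _ () ()]
      left; rfl
    · dsimp only
      rw [show (fun (_ : Unit) => false) ∘ ![(), ()] = ![false, false] from comp_vec2 _ () ()]
      right; left; rfl
  · intro x _ hS hR
    simp only [B2, Set.mem_insert_iff, Set.mem_singleton_iff, atm_eq_iff] at hS
    simp at hS
    subst hS
    exact Or.inr ⟨true, by simp, by right; right; left; rfl⟩
  · rintro x _ ⟨y, hy, hRyx⟩
    simp only [B2, Set.mem_insert_iff, Set.mem_singleton_iff, atm_eq_iff] at hRyx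
    simp at hRyx
    exact absurd (hRyx.1.trans hRyx.2.symm) hy
  · rintro x _ ⟨y, hy, hSyx⟩
    simp only [B2, Set.mem_insert_iff, Set.mem_singleton_iff, atm_eq_iff] at hSyx
    simp at hSyx
    rcases hSyx with ⟨rfl, rfl⟩ | ⟨rfl, rfl⟩
    · exact absurd rfl hy
    · exact ⟨true, by right; right; right; rfl⟩

lemma B3_mod : IsMod OLoop DLoop (fun _ => false) B3 := by
  refine ⟨fun a b _ => Subsingleton.elim a b, ?_, ?_, ?_, ?_⟩
  · rintro f hf
    rcases hf with rfl | rfl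
    · dsimp only
      rw [show (fun (_ : Unit) => false) ∘ ![(), ()] = ![false, false] from comp_vec2 _ () ()]
      left; rfl
    · dsimp only
      rw [show (fun (_ : Unit) => false) ∘ ![(), ()] = ![false, false] from comp_vec2 _ () ()]
      right; left; rfl
  · intro x _ hS hR
    simp only [B3, Set.mem_insert_iff, Set.mem_singleton_iff, atm_eq_iff] at hS
    simp at hS
    subst hS
    exact Or.inl ⟨true, by simp, by right; right; left; rfl⟩
  · rintro x _ ⟨y, hy, hRyx⟩
    simp only [B3, Set.mem_insert_iff, Set.mem_singleton_iff, atm_eq_iff] at hRyx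
    simp at hRyx
    rcases hRyx with ⟨rfl, rfl⟩ | ⟨rfl, rfl⟩
    · exact absurd rfl hy
    · exact ⟨true, by right; right; right; rfl⟩
  · rintro x _ ⟨y, hy, hSyx⟩
    simp only [B3, Set.mem_insert_iff, Set.mem_singleton_iff, atm_eq_iff] at hSyx
    simp at hSyx
    exact absurd (hSyx.1.trans hSyx.2.symm) hy

lemma part2 : ¬ CertainUCQ OLoop DLoop [qR15] Fin.elim0 := by
  intro h
  obtain ⟨q, hq, hans⟩ := h Bool (fun _ => false) B2 B2_mod
  simp at hq; subst hq
  obtain ⟨hm, hhom, -⟩ := hans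
  have := hhom ⟨Rel15.R', ![(0 : Fin 2), (1 : Fin 2)]⟩ rfl
  simp only [B2, Set.mem_insert_iff, Set.mem_singleton_iff, atm_eq_iff] at this
  simp at this

lemma part3 : ¬ CertainUCQ OLoop DLoop [qS15] Fin.elim0 := by
  intro h
  obtain ⟨q, hq, hans⟩ := h Bool (fun _ => false) B3 B3_mod
  simp at hq; subst hq
  obtain ⟨hm, hhom, -⟩ := hans
  have := hhom ⟨Rel15.S', ![(0 : Fin 2), (1 : Fin 2)]⟩ rfl
  simp only [B3, Set.mem_insert_iff, Set.mem_singleton_iff, atm_eq_iff] at this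
  simp at this
lemma part4 : ¬ Materializable15 := by
  intro hm
  obtain ⟨W, ι, B, hmod, hiff⟩ := hm Unit DLoop ⟨Bool, fun _ => false, B2, B2_mod⟩
  have h1 := (hiff 0 [qR15, qS15] Fin.elim0 (fun i => i.elim0)).mpr part1
  obtain ⟨q, hq, hans⟩ := h1
  simp at hq
  rcases hq with rfl | rfl
  · exact part2 ((hiff 0 [qR15] Fin.elim0 (fun i => i.elim0)).mp ⟨qR15, by simp, hans⟩)
  · exact part3 ((hiff 0 [qS15] Fin.elim0 (fun i => i.elim0)).mp ⟨qS15, by simp, hans⟩)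
def witD {V : Type} (D : Interp σ15 V) (v : V) : Prop :=
  (⟨Rel15.S, ![v, v]⟩ : Atm σ15 V) ∈ D ∧ (⟨Rel15.R, ![v, v]⟩ : Atm σ15 V) ∈ D

def trigR15 {V : Type} (D : Interp σ15 V) (v : V) : Prop :=
  ∃ u, u ≠ v ∧ (⟨Rel15.R, ![u, v]⟩ : Atm σ15 V) ∈ D

def trigS15 {V : Type} (D : Interp σ15 V) (v : V) : Prop :=
  ∃ u, u ≠ v ∧ (⟨Rel15.S, ![u, v]⟩ : Atm σ15 V) ∈ D

def BB {V : Type} (D : Interp σ15 V) : Interp σ15 (V × Fin 4) :=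
  { f | ∃ r : Rel15, ∃ h : Fin 2 → V, (⟨r, h⟩ : Atm σ15 V) ∈ D ∧ f = ⟨r, fun i => (h i, 0)⟩ } ∪
  { f | ∃ v, witD D v ∧
      (f = ⟨Rel15.S, ![(v,0),(v,1)]⟩ ∨ f = ⟨Rel15.R, ![(v,0),(v,1)]⟩) } ∪
  { f | ∃ v, trigR15 D v ∧ f = ⟨Rel15.R', ![(v,0),(v,2)]⟩ } ∪
  { f | ∃ v, witD D v ∧ f = ⟨Rel15.R', ![(v,1),(v,2)]⟩ } ∪
  { f | ∃ v, trigS15 D v ∧ f = ⟨Rel15.S', ![(v,0),(v,3)]⟩ } ∪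
  { f | ∃ v, witD D v ∧ f = ⟨Rel15.S', ![(v,1),(v,3)]⟩ }

lemma atm_eta {V : Type} (r : Rel15) (h : Fin 2 → V) :
    (⟨r, h⟩ : Atm σ15 V) = ⟨r, ![h 0, h 1]⟩ := by
  refine congrArg (Sigma.mk r) ?_
  funext i; fin_cases i <;> rfl

section
variable {V : Type} (D : Interp σ15 V)

lemma memBB_D {r : Rel15} {h : Fin 2 → V} (hD : (⟨r, h⟩ : Atm σ15 V) ∈ D) :
    (⟨r, fun i => (h i, 0)⟩ : Atm σ15 (V × Fin 4)) ∈ BB D :=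
  by simp only [BB, Set.mem_union, Set.mem_setOf_eq]; exact Or.inl (Or.inl (Or.inl (Or.inl (Or.inl ⟨r, h, hD, rfl⟩))))

lemma memBB_wS {v : V} (hw : witD D v) :
    (⟨Rel15.S, ![(v,0),(v,1)]⟩ : Atm σ15 (V × Fin 4)) ∈ BB D :=
  by simp only [BB, Set.mem_union, Set.mem_setOf_eq]; exact Or.inl (Or.inl (Or.inl (Or.inl (Or.inr ⟨v, hw, Or.inl rfl⟩))))

lemma memBB_wR {v : V} (hw : witD D v) :
    (⟨Rel15.R, ![(v,0),(v,1)]⟩ : Atm σ15 (V × Fin 4)) ∈ BB D :=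
  by simp only [BB, Set.mem_union, Set.mem_setOf_eq]; exact Or.inl (Or.inl (Or.inl (Or.inl (Or.inr ⟨v, hw, Or.inr rfl⟩))))

lemma memBB_tR {v : V} (ht : trigR15 D v) :
    (⟨Rel15.R', ![(v,0),(v,2)]⟩ : Atm σ15 (V × Fin 4)) ∈ BB D :=
  by simp only [BB, Set.mem_union, Set.mem_setOf_eq]; exact Or.inl (Or.inl (Or.inl (Or.inr ⟨v, ht, rfl⟩)))

lemma memBB_wR' {v : V} (hw : witD D v) :
    (⟨Rel15.R', ![(v,1),(v,2)]⟩ : Atm σ15 (V × Fin 4)) ∈ BB D :=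
  by simp only [BB, Set.mem_union, Set.mem_setOf_eq]; exact Or.inl (Or.inl (Or.inr ⟨v, hw, rfl⟩))

lemma memBB_tS {v : V} (ht : trigS15 D v) :
    (⟨Rel15.S', ![(v,0),(v,3)]⟩ : Atm σ15 (V × Fin 4)) ∈ BB D :=
  by simp only [BB, Set.mem_union, Set.mem_setOf_eq]; exact Or.inl (Or.inr ⟨v, ht, rfl⟩)

lemma memBB_wS' {v : V} (hw : witD D v) :
    (⟨Rel15.S', ![(v,1),(v,3)]⟩ : Atm σ15 (V × Fin 4)) ∈ BB D :=
  by simp only [BB, Set.mem_union, Set.mem_setOf_eq]; exact Or.inr ⟨v, hw, rfl⟩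

lemma BB_cases {f : Atm σ15 (V × Fin 4)} (hf : f ∈ BB D) :
    (∃ r : Rel15, ∃ h : Fin 2 → V, (⟨r, h⟩ : Atm σ15 V) ∈ D ∧ f = ⟨r, fun i => (h i, 0)⟩) ∨
    (∃ v, witD D v ∧
      (f = ⟨Rel15.S, ![(v,0),(v,1)]⟩ ∨ f = ⟨Rel15.R, ![(v,0),(v,1)]⟩)) ∨
    (∃ v, trigR15 D v ∧ f = ⟨Rel15.R', ![(v,0),(v,2)]⟩) ∨
    (∃ v, witD D v ∧ f = ⟨Rel15.R', ![(v,1),(v,2)]⟩) ∨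
    (∃ v, trigS15 D v ∧ f = ⟨Rel15.S', ![(v,0),(v,3)]⟩) ∨
    (∃ v, witD D v ∧ f = ⟨Rel15.S', ![(v,1),(v,3)]⟩) := by
  simp only [BB, Set.mem_union, Set.mem_setOf_eq] at hf
  rcases hf with ((((h | h) | h) | h) | h) | h
  exacts [Or.inl h, Or.inr (Or.inl h), Or.inr (Or.inr (Or.inl h)),
    Or.inr (Or.inr (Or.inr (Or.inl h))), Or.inr (Or.inr (Or.inr (Or.inr (Or.inl h)))),
    Or.inr (Or.inr (Or.inr (Or.inr (Or.inr h))))]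

end
section
variable {V : Type} {D : Interp σ15 V}

lemma BB_S_diag {x : V × Fin 4}
    (h : (⟨Rel15.S, ![x, x]⟩ : Atm σ15 (V × Fin 4)) ∈ BB D) :
    ∃ v, x = (v, 0) ∧ (⟨Rel15.S, ![v, v]⟩ : Atm σ15 V) ∈ D := by
  rcases BB_cases D h with ⟨r, h', hD, e⟩ | ⟨v, hw, e | e⟩ | ⟨v, ht, e⟩ | ⟨v, hw, e⟩ |
      ⟨v, ht, e⟩ | ⟨v, hw, e⟩ <;> rw [atm_eq_iff] at e <;>
    simp only [atm_eq_iff, Matrix.cons_val_zero, Matrix.cons_val_one, Matrix.head_cons,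
      Prod.mk.injEq, reduceCtorEq, false_and, and_false, true_and, and_true] at e
  · obtain ⟨rfl, e0, e1⟩ := e
    refine ⟨h' 0, e0, ?_⟩
    have h01 : h' 1 = h' 0 := by rw [e0] at e1; exact (congrArg Prod.fst e1).symm
    rw [atm_eta Rel15.S h', h01] at hD
    exact hD
  · obtain ⟨e0, e1⟩ := e
    rw [e0] at e1
    exact absurd (congrArg Prod.snd e1) (by simp)

lemma BB_R_diag {x : V × Fin 4}
    (h : (⟨Rel15.R, ![x, x]⟩ : Atm σ15 (V × Fin 4)) ∈ BB D) :
    ∃ v, x = (v, 0) ∧ (⟨Rel15.R, ![v, v]⟩ : Atm σ15 V) ∈ D := by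
  rcases BB_cases D h with ⟨r, h', hD, e⟩ | ⟨v, hw, e | e⟩ | ⟨v, ht, e⟩ | ⟨v, hw, e⟩ |
      ⟨v, ht, e⟩ | ⟨v, hw, e⟩ <;> rw [atm_eq_iff] at e <;>
    simp only [atm_eq_iff, Matrix.cons_val_zero, Matrix.cons_val_one, Matrix.head_cons,
      Prod.mk.injEq, reduceCtorEq, false_and, and_false, true_and, and_true] at e
  · obtain ⟨rfl, e0, e1⟩ := e
    refine ⟨h' 0, e0, ?_⟩
    have h01 : h' 1 = h' 0 := by rw [e0] at e1; exact (congrArg Prod.fst e1).symm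
    rw [atm_eta Rel15.R h', h01] at hD
    exact hD
  · obtain ⟨e0, e1⟩ := e
    rw [e0] at e1
    exact absurd (congrArg Prod.snd e1) (by simp)

lemma BB_R_in {x y : V × Fin 4} (hne : y ≠ x)
    (h : (⟨Rel15.R, ![y, x]⟩ : Atm σ15 (V × Fin 4)) ∈ BB D) :
    (∃ v, x = (v, 0) ∧ trigR15 D v) ∨ (∃ v, x = (v, 1) ∧ witD D v) := by
  rcases BB_cases D h with ⟨r, h', hD, e⟩ | ⟨v, hw, e | e⟩ | ⟨v, ht, e⟩ | ⟨v, hw, e⟩ |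
      ⟨v, ht, e⟩ | ⟨v, hw, e⟩ <;> rw [atm_eq_iff] at e <;>
    simp only [atm_eq_iff, Matrix.cons_val_zero, Matrix.cons_val_one, Matrix.head_cons,
      Prod.mk.injEq, reduceCtorEq, false_and, and_false, true_and, and_true] at e
  · obtain ⟨rfl, e0, e1⟩ := e
    refine Or.inl ⟨h' 1, e1, h' 0, ?_, by rw [← atm_eta]; exact hD⟩
    intro huv
    exact hne (by rw [e0, e1, huv])
  · exact Or.inr ⟨v, e.2, hw⟩

lemma BB_S_in {x y : V × Fin 4} (hne : y ≠ x)
    (h : (⟨Rel15.S, ![y, x]⟩ : Atm σ15 (V × Fin 4)) ∈ BB D) :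
    (∃ v, x = (v, 0) ∧ trigS15 D v) ∨ (∃ v, x = (v, 1) ∧ witD D v) := by
  rcases BB_cases D h with ⟨r, h', hD, e⟩ | ⟨v, hw, e | e⟩ | ⟨v, ht, e⟩ | ⟨v, hw, e⟩ |
      ⟨v, ht, e⟩ | ⟨v, hw, e⟩ <;> rw [atm_eq_iff] at e <;>
    simp only [atm_eq_iff, Matrix.cons_val_zero, Matrix.cons_val_one, Matrix.head_cons,
      Prod.mk.injEq, reduceCtorEq, false_and, and_false, true_and, and_true] at e
  · obtain ⟨rfl, e0, e1⟩ := e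
    refine Or.inl ⟨h' 1, e1, h' 0, ?_, by rw [← atm_eta]; exact hD⟩
    intro huv
    exact hne (by rw [e0, e1, huv])
  · exact Or.inr ⟨v, e.2, hw⟩

lemma BB_mod : IsMod OLoop (D := D) (fun v => (v, 0)) (BB D) := by
  refine ⟨fun a b hab => congrArg Prod.fst hab, ?_, ?_, ?_, ?_⟩
  · rintro ⟨r, h⟩ hf
    exact memBB_D D hf
  · intro x _ hS hR
    obtain ⟨v, rfl, hSv⟩ := BB_S_diag hS
    obtain ⟨w, hw, hRw⟩ := BB_R_diag hR
    have hvw : w = v := (congrArg Prod.fst hw).symm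
    rw [hvw] at hRw
    refine Or.inr ⟨(v, 1), by simp, memBB_wS D ⟨hSv, hRw⟩⟩
  · rintro x _ ⟨y, hy, hRyx⟩
    rcases BB_R_in hy hRyx with ⟨v, rfl, ht⟩ | ⟨v, rfl, hw⟩
    · exact ⟨(v, 2), memBB_tR D ht⟩
    · exact ⟨(v, 2), memBB_wR' D hw⟩
  · rintro x _ ⟨y, hy, hSyx⟩
    rcases BB_S_in hy hSyx with ⟨v, rfl, ht⟩ | ⟨v, rfl, hw⟩
    · exact ⟨(v, 3), memBB_tS D ht⟩
    · exact ⟨(v, 3), memBB_wS' D hw⟩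

end
section
variable {V : Type} {D : Interp σ15 V}

lemma nb2 {a v : V} (h : ((v, (2 : Fin 4)) : V × Fin 4) ∈ Nbhd15 (BB D) (a, 0)) :
    trigR15 D v := by
  rcases h with h | ⟨r, h | h⟩
  · exact absurd (congrArg Prod.snd h) (by simp)
  · rcases BB_cases D h with ⟨r', h', hD, e⟩ | ⟨u, hw, e | e⟩ | ⟨u, ht, e⟩ | ⟨u, hw, e⟩ |
        ⟨u, ht, e⟩ | ⟨u, hw, e⟩ <;> rw [atm_eq_iff] at e <;>
      simp only [atm_eq_iff, Matrix.cons_val_zero, Matrix.cons_val_one, Matrix.head_cons,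
        Prod.mk.injEq, reduceCtorEq, Fin.reduceEq, false_and, and_false, true_and,
        and_true] at e
    obtain ⟨-, rfl, rfl⟩ := e
    exact ht
  · rcases BB_cases D h with ⟨r', h', hD, e⟩ | ⟨u, hw, e | e⟩ | ⟨u, ht, e⟩ | ⟨u, hw, e⟩ |
        ⟨u, ht, e⟩ | ⟨u, hw, e⟩ <;> rw [atm_eq_iff] at e <;>
      simp only [atm_eq_iff, Matrix.cons_val_zero, Matrix.cons_val_one, Matrix.head_cons,
        Prod.mk.injEq, reduceCtorEq, Fin.reduceEq, false_and, and_false, true_and,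
        and_true] at e

lemma nb3 {a v : V} (h : ((v, (3 : Fin 4)) : V × Fin 4) ∈ Nbhd15 (BB D) (a, 0)) :
    trigS15 D v := by
  rcases h with h | ⟨r, h | h⟩
  · exact absurd (congrArg Prod.snd h) (by simp)
  · rcases BB_cases D h with ⟨r', h', hD, e⟩ | ⟨u, hw, e | e⟩ | ⟨u, ht, e⟩ | ⟨u, hw, e⟩ |
        ⟨u, ht, e⟩ | ⟨u, hw, e⟩ <;> rw [atm_eq_iff] at e <;>
      simp only [atm_eq_iff, Matrix.cons_val_zero, Matrix.cons_val_one, Matrix.head_cons,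
        Prod.mk.injEq, reduceCtorEq, Fin.reduceEq, false_and, and_false, true_and,
        and_true] at e
    obtain ⟨-, rfl, rfl⟩ := e
    exact ht
  · rcases BB_cases D h with ⟨r', h', hD, e⟩ | ⟨u, hw, e | e⟩ | ⟨u, ht, e⟩ | ⟨u, hw, e⟩ |
        ⟨u, ht, e⟩ | ⟨u, hw, e⟩ <;> rw [atm_eq_iff] at e <;>
      simp only [atm_eq_iff, Matrix.cons_val_zero, Matrix.cons_val_one, Matrix.head_cons,
        Prod.mk.injEq, reduceCtorEq, Fin.reduceEq, false_and, and_false, true_and,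
        and_true] at e

end

lemma oneMat (V : Type) (D : Interp σ15 V) (a : V) : OneMat15 D a := by
  classical
  refine ⟨V × Fin 4, fun v => (v, 0), BB D, BB_mod, ?_⟩
  rintro W' ι' B' ⟨hinj', hhom', hO'⟩
  have hRw : ∀ v, trigR15 D v → ∃ z, (⟨Rel15.R', ![ι' v, z]⟩ : Atm σ15 W') ∈ B' := by
    rintro v ⟨u, hu, hRuv⟩
    have hB : (⟨Rel15.R, ![ι' u, ι' v]⟩ : Atm σ15 W') ∈ B' := by
      have := hhom' ⟨Rel15.R, ![u, v]⟩ hRuv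
      dsimp only at this
      rwa [show ι' ∘ ![u, v] = ![ι' u, ι' v] from comp_vec2 ι' u v] at this
    exact hO'.2.1 (ι' v) ⟨_, hB, (1 : Fin 2), rfl⟩ ⟨ι' u, fun hh => hu (hinj' hh), hB⟩
  have hSw : ∀ v, trigS15 D v → ∃ z, (⟨Rel15.S', ![ι' v, z]⟩ : Atm σ15 W') ∈ B' := by
    rintro v ⟨u, hu, hSuv⟩
    have hB : (⟨Rel15.S, ![ι' u, ι' v]⟩ : Atm σ15 W') ∈ B' := by
      have := hhom' ⟨Rel15.S, ![u, v]⟩ hSuv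
      dsimp only at this
      rwa [show ι' ∘ ![u, v] = ![ι' u, ι' v] from comp_vec2 ι' u v] at this
    exact hO'.2.2 (ι' v) ⟨_, hB, (1 : Fin 2), rfl⟩ ⟨ι' u, fun hh => hu (hinj' hh), hB⟩
  set g : V × Fin 4 → W' := fun p =>
    if p.2 = 2 then (if h : trigR15 D p.1 then (hRw p.1 h).choose else ι' p.1)
    else if p.2 = 3 then (if h : trigS15 D p.1 then (hSw p.1 h).choose else ι' p.1)
    else ι' p.1 with hgdef
  have hg0 : ∀ v, g (v, 0) = ι' v := by intro v; simp [hgdef]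
  have hg1 : ∀ v, g (v, 1) = ι' v := by intro v; simp [hgdef]
  have hg2 : ∀ v, trigR15 D v →
      (⟨Rel15.R', ![ι' v, g (v, 2)]⟩ : Atm σ15 W') ∈ B' := by
    intro v h
    have : g (v, 2) = (hRw v h).choose := by simp [hgdef, h]
    rw [this]
    exact (hRw v h).choose_spec
  have hg3 : ∀ v, trigS15 D v →
      (⟨Rel15.S', ![ι' v, g (v, 3)]⟩ : Atm σ15 W') ∈ B' := by
    intro v h
    have : g (v, 3) = (hSw v h).choose := by simp [hgdef, h]
    rw [this]
    exact (hSw v h).choose_spec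
  refine ⟨g, ?_, ?_⟩
  · intro f hf hnb
    rcases BB_cases D hf with ⟨r, h', hD, rfl⟩ | ⟨v, hw, rfl | rfl⟩ | ⟨v, ht, rfl⟩ |
        ⟨v, hw, rfl⟩ | ⟨v, ht, rfl⟩ | ⟨v, hw, rfl⟩
    · have := hhom' ⟨r, h'⟩ hD
      convert this using 2
      funext i
      exact hg0 (h' i)
    · show (⟨Rel15.S, g ∘ ![(v, 0), (v, 1)]⟩ : Atm σ15 W') ∈ B'
      have hc : g ∘ ![(v, 0), (v, 1)] = ![ι' v, ι' v] := by
        funext i; fin_cases i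
        · exact hg0 v
        · exact hg1 v
      rw [hc]
      have := hhom' ⟨Rel15.S, ![v, v]⟩ hw.1
      rwa [show ι' ∘ ![v, v] = ![ι' v, ι' v] from comp_vec2 ι' v v] at this
    · show (⟨Rel15.R, g ∘ ![(v, 0), (v, 1)]⟩ : Atm σ15 W') ∈ B'
      have hc : g ∘ ![(v, 0), (v, 1)] = ![ι' v, ι' v] := by
        funext i; fin_cases i
        · exact hg0 v
        · exact hg1 v
      rw [hc]
      have := hhom' ⟨Rel15.R, ![v, v]⟩ hw.2
      rwa [show ι' ∘ ![v, v] = ![ι' v, ι' v] from comp_vec2 ι' v v] at this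
    · show (⟨Rel15.R', g ∘ ![(v, 0), (v, 2)]⟩ : Atm σ15 W') ∈ B'
      have hc : g ∘ ![(v, 0), (v, 2)] = ![ι' v, g (v, 2)] := by
        funext i; fin_cases i
        · exact hg0 v
        · rfl
      rw [hc]
      exact hg2 v ht
    · show (⟨Rel15.R', g ∘ ![(v, 1), (v, 2)]⟩ : Atm σ15 W') ∈ B'
      have ht : trigR15 D v := nb2 (hnb (1 : Fin 2))
      have hc : g ∘ ![(v, 1), (v, 2)] = ![ι' v, g (v, 2)] := by
        funext i; fin_cases i
        · exact hg1 v
        · rfl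
      rw [hc]
      exact hg2 v ht
    · show (⟨Rel15.S', g ∘ ![(v, 0), (v, 3)]⟩ : Atm σ15 W') ∈ B'
      have hc : g ∘ ![(v, 0), (v, 3)] = ![ι' v, g (v, 3)] := by
        funext i; fin_cases i
        · exact hg0 v
        · rfl
      rw [hc]
      exact hg3 v ht
    · show (⟨Rel15.S', g ∘ ![(v, 1), (v, 3)]⟩ : Atm σ15 W') ∈ B'
      have ht : trigS15 D v := nb3 (hnb (1 : Fin 2))
      have hc : g ∘ ![(v, 1), (v, 3)] = ![ι' v, g (v, 3)] := by
        funext i; fin_cases i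
        · exact hg1 v
        · rfl
      rw [hc]
      exact hg3 v ht
  · intro d _
    exact hg0 d

/-- For the instance `D = {S(a,a), R(a,a)}` and the ontology `O_loop` above:
`O_loop, D ⊨ (∃xy R'(x,y)) ∨ (∃xy S'(x,y))`, but `O_loop, D ⊭ ∃xy R'(x,y)` and
`O_loop, D ⊭ ∃xy S'(x,y)`; hence `O_loop` is not materializable, although every bouquet
consistent with `O_loop` has a 1-materialization with respect to `O_loop`. -/
theorem stmt15 :
    CertainUCQ OLoop DLoop [qR15, qS15] Fin.elim0 ∧
    ¬ CertainUCQ OLoop DLoop [qR15] Fin.elim0 ∧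
    ¬ CertainUCQ OLoop DLoop [qS15] Fin.elim0 ∧
    ¬ Materializable15 ∧
    (∀ (V : Type) (D : Interp σ15 V) (a : V), IsBouquet15 D a → Consistent OLoop D →
      OneMat15 D a) := by
  exact ⟨part1, part2, part3, part4, fun V D a _ _ => oneMat V D a⟩
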